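/- Let n ≥ 2 and let a_m(x) := (2/n) Σ_{j=1}^n g_{m−1}^{[j]}(x) for m ≥ 2, with a_1 := 0, where g_1^{[j]} = v_j, g_2^{[j]} = −v_j', g_m^{[j]} = −(g_{m−1}^{[j]})' − Σ_{p=1}^{m−2} g_p^{[j]} g_{m−p−1}^{[j]}, and each v_j is smooth. Define b_1 = a_1', b_m = a_m' − Σ_{p=1}^{m−1} b_p a_{m−p}, and C_m := a_m(0) + Σ_{p=1}^{m−1} ∫_0^∞ b_p(y) a_{m−p}(y) dy (with C_1 = 0). Then C_2 = (2/n) Σ_{j=1}^n v_j(0), C_3 = −(2/n) Σ_{j=1}^n v_j'(0), and C_4 = (2/n) Σ_{j=1}^n (v_j''(0) − v_j(0)²) − (2/n²)(Σ_{j=1}^n v_j(0))², assuming each a_m(x) → 0 as x → ∞ and all relevant integrals converge. -/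

import Mathlib

open Set MeasureTheory

theorem stmt_8 (n : ℕ) (hn : 2 ≤ n) (v : Fin n → ℝ → ℝ)
    (hv : ∀ j, ContDiff ℝ (⊤ : ℕ∞) (v j))
    (g : Fin n → ℕ → ℝ → ℝ)
    (hg1 : ∀ j, g j 1 = v j)
    (hg2 : ∀ j, g j 2 = fun x => -deriv (v j) x)
    (hg : ∀ j, ∀ m, 3 ≤ m → g j m = fun x =>
      -deriv (g j (m - 1)) x - ∑ p ∈ Finset.Icc 1 (m - 2), g j p x * g j (m - p - 1) x)
    (a : ℕ → ℝ → ℝ)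
    (ha1 : a 1 = fun _ => 0)
    (ha : ∀ m, 2 ≤ m → a m = fun x => (2 / (n : ℝ)) * ∑ j, g j (m - 1) x)
    (b : ℕ → ℝ → ℝ)
    (hb1 : b 1 = fun x => deriv (a 1) x)
    (hb : ∀ m, 2 ≤ m → b m = fun x =>
      deriv (a m) x - ∑ p ∈ Finset.Icc 1 (m - 1), b p x * a (m - p) x)
    (C : ℕ → ℝ)
    (hC : ∀ m, 2 ≤ m → C m = a m 0 +
      ∑ p ∈ Finset.Icc 1 (m - 1), ∫ y in Ioi (0:ℝ), b p y * a (m - p) y)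
    (hdecay : ∀ m, 2 ≤ m → Filter.Tendsto (a m) Filter.atTop (nhds 0))
    (hint : ∀ p q : ℕ, IntegrableOn (fun y => b p y * a q y) (Ioi 0)) :
    C 2 = (2 / (n : ℝ)) * ∑ j, v j 0 ∧
      C 3 = -((2 / (n : ℝ)) * ∑ j, deriv (v j) 0) ∧
      C 4 = (2 / (n : ℝ)) * ∑ j, (deriv (deriv (v j)) 0 - v j 0 ^ 2) -
        (2 / (n : ℝ) ^ 2) * (∑ j, v j 0) ^ 2 := by
  -- b 1 = 0
  have hb1' : b 1 = fun _ => (0 : ℝ) := by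
    rw [hb1, ha1]
    funext x
    simp [deriv_const]
  -- a 2 explicit
  have ha2 : a 2 = fun x => (2 / (n : ℝ)) * ∑ j, v j x := by
    rw [ha 2 le_rfl]
    funext x
    simp [hg1]
  -- a 2 differentiable
  have ha2diff : Differentiable ℝ (a 2) := by
    rw [ha2]
    exact (differentiable_const _).mul
      (Differentiable.fun_sum fun j _ => (hv j).differentiable (by simp))
  -- b 2 = deriv (a 2)
  have hb2' : b 2 = fun x => deriv (a 2) x := by
    rw [hb 2 le_rfl]
    funext x
    simp [ha1]
  -- key integral
  have hkey : (∫ y in Ioi (0:ℝ), b 2 y * a 2 y) = - (a 2 0) ^ 2 / 2 := by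
    have hd : ∀ x ∈ Ici (0:ℝ), HasDerivAt (fun y => (a 2 y) ^ 2 / 2) (b 2 x * a 2 x) x := by
      intro x _
      have h := (ha2diff x).hasDerivAt
      have h2 := (h.mul h).div_const 2
      have : b 2 x * a 2 x = (deriv (a 2) x * a 2 x + a 2 x * deriv (a 2) x) / 2 := by
        rw [hb2']; ring
      rw [this]
      simpa [pow_two] using h2
    have ht : Filter.Tendsto (fun y => (a 2 y) ^ 2 / 2) Filter.atTop (nhds 0) := by
      have := ((hdecay 2 le_rfl).mul (hdecay 2 le_rfl)).div_const 2
      simpa [pow_two] using this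
    have := integral_Ioi_of_hasDerivAt_of_tendsto' hd (hint 2 2) ht
    rw [this]; ring
  refine ⟨?_, ?_, ?_⟩
  · rw [hC 2 le_rfl, show Finset.Icc 1 (2-1) = {1} from rfl]
    simp [hb1', ha 2 le_rfl, hg1]
  · rw [hC 3 (by norm_num), show Finset.Icc 1 (3-1) = {1, 2} from rfl]
    have ha3 : a 3 0 = -((2 / (n : ℝ)) * ∑ j, deriv (v j) 0) := by
      rw [ha 3 (by norm_num)]
      simp [hg2, Finset.mul_sum]
    rw [Finset.sum_insert (by decide), Finset.sum_singleton]
    simp [hb1', ha1, ha3]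
  · rw [hC 4 (by norm_num), show Finset.Icc 1 (4-1) = {1, 2, 3} from rfl]
    rw [Finset.sum_insert (by decide), Finset.sum_insert (by decide), Finset.sum_singleton]
    have ha4 : a 4 0 = (2 / (n : ℝ)) * ∑ j, (deriv (deriv (v j)) 0 - v j 0 ^ 2) := by
      rw [ha 4 (by norm_num)]
      show (2 / (n : ℝ)) * ∑ j, g j 3 0 = _
      congr 1
      refine Finset.sum_congr rfl fun j _ => ?_
      rw [hg j 3 le_rfl]
      have : deriv (g j 2) 0 = -(deriv (deriv (v j)) 0) := by
        rw [hg2 j]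
        simp [deriv.neg]
      simp [this, hg1, pow_two, show Finset.Icc 1 (3-2) = {1} from rfl]
    have ha20 : a 2 0 = (2 / (n : ℝ)) * ∑ j, v j 0 := by rw [ha2]
    rw [ha4, hkey, ha20]
    simp only [hb1', ha1, mul_zero, zero_mul, integral_zero]
    have hn0 : (n : ℝ) ≠ 0 := by positivity
    field_simp
    ring
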